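/- arXiv:2602.24151 — 3 statements merged into one kernel-verified Lean document; each statement's English description precedes it below -/
import Mathlib

section
/- Vertex deletion recurrence: For any vertex v of a finite simple graph G and any B ⊆ V(G), C_B(G; x, y) = C_B(G \ v; x, y) + x · y^{[v ∈ B]} · C_{B ∩ N(v)}(G[N(v)]; x, y), where [v ∈ B] is 1 if v ∈ B and 0 otherwise. -/
open scoped Classical

/-- `C_B(G[W]; x, y)`: the bivariate `B`-restricted clique polynomial of the induced
subgraph of `G` on the vertex window `W`, i.e. the sum of `x^{|K|} y^{|K ∩ B|}` over
all cliques `K` of `G` contained in `W` (including the empty clique). -/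
noncomputable def biCliquePolyOn {V : Type*} [Fintype V] (G : SimpleGraph V)
    (W B : Finset V) (x y : ℝ) : ℝ :=
  ∑ K ∈ Finset.univ.filter (fun K : Finset V => G.IsClique (K : Set V) ∧ K ⊆ W),
    x ^ K.card * y ^ (K ∩ B).card

private lemma biCliquePoly_aux {V : Type*} [Fintype V]
    (G : SimpleGraph V) (B : Finset V) (v : V) (x y : ℝ) :
    biCliquePolyOn G Finset.univ B x y
      = biCliquePolyOn G (Finset.univ \ {v}) B x y
        + x * y ^ (if v ∈ B then 1 else 0)
          * biCliquePolyOn G (G.neighborFinset v) (B ∩ G.neighborFinset v) x y := by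
  unfold biCliquePolyOn
  rw [← Finset.sum_filter_add_sum_filter_not
        (Finset.univ.filter (fun K : Finset V => G.IsClique (K : Set V) ∧ K ⊆ Finset.univ))
        (fun K => v ∉ K) (fun K : Finset V => x ^ K.card * y ^ (K ∩ B).card)]
  congr 1
  · apply Finset.sum_congr _ (fun _ _ => rfl)
    ext K
    simp only [Finset.mem_filter, Finset.mem_univ, true_and, Finset.subset_sdiff,
      Finset.disjoint_singleton_right, Finset.subset_univ, and_true, true_and]
  · rw [Finset.mul_sum]
    refine Finset.sum_bij' (fun K _ => K.erase v) (fun K _ => insert v K) ?_ ?_ ?_ ?_ ?_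
    · intro K hK
      simp only [Finset.mem_filter, Finset.mem_univ, true_and, not_not,
        Finset.subset_univ, and_true] at hK
      obtain ⟨hc, hv⟩ := hK
      simp only [Finset.mem_filter, Finset.mem_univ, true_and]
      refine ⟨hc.subset (by intro b hb; exact Finset.mem_of_mem_erase (by exact_mod_cast hb)), ?_⟩
      intro b hb
      rw [SimpleGraph.mem_neighborFinset]
      exact hc (Finset.mem_coe.mpr hv)
        (Finset.mem_coe.mpr (Finset.mem_of_mem_erase hb))
        (fun h => (Finset.ne_of_mem_erase hb) h.symm)
    · intro K hK
      simp only [Finset.mem_filter, Finset.mem_univ, true_and] at hK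
      obtain ⟨hc, hW⟩ := hK
      simp only [Finset.mem_filter, Finset.mem_univ, true_and, not_not,
        Finset.subset_univ, and_true]
      refine ⟨?_, Finset.mem_insert_self _ _⟩
      rw [Finset.coe_insert]
      refine hc.insert ?_
      intro b hb hbv
      exact (SimpleGraph.mem_neighborFinset G v b).mp (hW hb)
    · intro K hK
      simp only [Finset.mem_filter, Finset.mem_univ, true_and, not_not,
        Finset.subset_univ, and_true] at hK
      exact Finset.insert_erase hK.2
    · intro K hK
      simp only [Finset.mem_filter, Finset.mem_univ, true_and] at hK
      exact Finset.erase_insert (fun h => G.notMem_neighborFinset_self v (hK.2 h))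
    · intro K hK
      simp only [Finset.mem_filter, Finset.mem_univ, true_and, not_not,
        Finset.subset_univ, and_true] at hK
      obtain ⟨hc, hv⟩ := hK
      set K' := K.erase v with hK'
      have hW : K' ⊆ G.neighborFinset v := by
        intro b hb
        rw [SimpleGraph.mem_neighborFinset]
        exact hc (Finset.mem_coe.mpr hv)
          (Finset.mem_coe.mpr (Finset.mem_of_mem_erase hb))
          (fun h => (Finset.ne_of_mem_erase hb) h.symm)
      have hv' : v ∉ K' := Finset.notMem_erase v K
      have hKeq : K = insert v K' := (Finset.insert_erase hv).symm
      have hKB : K' ∩ B = K' ∩ (B ∩ G.neighborFinset v) := by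
        ext b
        simp only [Finset.mem_inter]
        exact ⟨fun ⟨h1, h2⟩ => ⟨h1, h2, hW h1⟩, fun ⟨h1, h2, _⟩ => ⟨h1, h2⟩⟩
      have hcard : K.card = K'.card + 1 := by
        rw [hKeq, Finset.card_insert_of_notMem hv']
      have hIB : (K ∩ B).card = (K' ∩ (B ∩ G.neighborFinset v)).card
          + (if v ∈ B then 1 else 0) := by
        rw [hKeq]
        split_ifs with hvB
        · rw [Finset.insert_inter_of_mem hvB, Finset.card_insert_of_notMem
            (fun h => hv' (Finset.mem_of_mem_inter_left h)), hKB]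
        · rw [Finset.insert_inter_of_notMem hvB, hKB, Nat.add_zero]
      rw [hcard, hIB, pow_add, pow_add, pow_one]
      ring

set_option maxHeartbeats 1000000 in
/-- Vertex deletion recurrence:
`C_B(G;x,y) = C_B(G \ v; x,y) + x · y^{[v ∈ B]} · C_{B ∩ N(v)}(G[N(v)]; x,y)`. -/
theorem biCliquePoly_vertex_deletion {V : Type*} [Fintype V] [DecidableEq V]
    (G : SimpleGraph V) [DecidableRel G.Adj] (B : Finset V) (v : V) (x y : ℝ) :
    biCliquePolyOn G Finset.univ B x y
      = biCliquePolyOn G (Finset.univ \ {v}) B x y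
        + x * y ^ (if v ∈ B then 1 else 0)
          * biCliquePolyOn G (G.neighborFinset v) (B ∩ G.neighborFinset v) x y := by
  have h := biCliquePoly_aux G B v x y
  convert h using 3
  · ext a; simp
  · by_cases hvB : v ∈ B <;> simp [hvB]
  · congr 1 <;> · ext a; simp [SimpleGraph.mem_neighborFinset]
end

section
/- Edge deletion recurrence: For any edge uv of a finite simple graph G and any B ⊆ V(G), C_B(G; x, y) = C_B(G − uv; x, y) + x² · y^{[u ∈ B] + [v ∈ B]} · C_{B ∩ N(u) ∩ N(v)}(G[N(u) ∩ N(v)]; x, y). -/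
open scoped Classical

/-- The bivariate `B`-restricted clique polynomial
`C_B(G;x,y) = Σ_{K clique} x^{|K|} y^{|K ∩ B|}` (including the empty clique). -/
noncomputable def biCliquePoly {V : Type*} [Fintype V] (G : SimpleGraph V)
    (B : Finset V) (x y : ℝ) : ℝ :=
  ∑ K ∈ Finset.univ.filter (fun K : Finset V => G.IsClique (K : Set V)),
    x ^ K.card * y ^ (K ∩ B).card

/-- Edge deletion recurrence:
`C_B(G;x,y) = C_B(G − uv; x,y)
  + x² · y^{[u ∈ B] + [v ∈ B]} · C_{B ∩ N(u) ∩ N(v)}(G[N(u) ∩ N(v)]; x,y)`. -/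
theorem biCliquePoly_edge_deletion {V : Type*} [Fintype V] [DecidableEq V]
    (G : SimpleGraph V) [DecidableRel G.Adj] (B : Finset V) (u v : V)
    (huv : G.Adj u v) (x y : ℝ) :
    biCliquePoly G B x y
      = biCliquePoly (G.deleteEdges {s(u, v)}) B x y
        + x ^ 2 * y ^ ((if u ∈ B then 1 else 0) + (if v ∈ B then 1 else 0))
          * biCliquePolyOn G (G.neighborFinset u ∩ G.neighborFinset v)
              (B ∩ (G.neighborFinset u ∩ G.neighborFinset v)) x y := by
  classical
  have hne : u ≠ v := huv.ne
  set W : Finset V := G.neighborFinset u ∩ G.neighborFinset v with hW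
  rw [biCliquePoly, ← Finset.sum_filter_add_sum_filter_not _
    (fun K : Finset V => u ∈ K ∧ v ∈ K), add_comm]
  congr 1
  · -- cliques avoiding the pair = cliques of G − uv
    rw [biCliquePoly]
    refine Finset.sum_congr ?_ (fun _ _ => rfl)
    apply Finset.ext
    intro K
    simp
    constructor
    · rintro ⟨hK, hnot⟩
      intro a ha b hb hab
      have hadj : G.Adj a b := hK ha hb hab
      refine ⟨hadj, ?_⟩
      simp only [SimpleGraph.fromEdgeSet_adj, Set.mem_singleton_iff, Sym2.eq_iff]
      rintro ⟨⟨rfl, rfl⟩ | ⟨rfl, rfl⟩, -⟩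
      · exact hnot ha hb
      · exact hnot hb ha
    · intro hK
      refine ⟨hK.mono sdiff_le, fun hu hv => ?_⟩
      have := hK hu hv hne
      rw [SimpleGraph.deleteEdges_adj] at this
      exact this.2 (by simp)
  · -- cliques containing u and v
    rw [biCliquePolyOn, Finset.mul_sum]
    refine Finset.sum_nbij' (fun K => K \ {u, v})
      (fun K' => insert u (insert v K')) ?_ ?_ ?_ ?_ ?_
    · rintro K hK
      simp only [Finset.mem_filter, Finset.mem_univ, true_and] at hK ⊢
      obtain ⟨hK, hu, hv⟩ := hK
      constructor
      · exact hK.subset (Finset.coe_subset.2 Finset.sdiff_subset)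
      · intro a ha
        simp only [Finset.mem_sdiff, Finset.mem_insert, Finset.mem_singleton,
          not_or] at ha
        obtain ⟨haK, hau, hav⟩ := ha
        simp only [hW, Finset.mem_inter, SimpleGraph.mem_neighborFinset]
        exact ⟨hK hu haK (Ne.symm hau), hK hv haK (Ne.symm hav)⟩
    · rintro K' hK'
      simp only [Finset.mem_filter, Finset.mem_univ, true_and] at hK' ⊢
      obtain ⟨hK', hsub⟩ := hK'
      have hWmem : ∀ a ∈ K', G.Adj u a ∧ G.Adj v a := by
        intro a ha
        have := hsub ha
        simp only [hW, Finset.mem_inter, SimpleGraph.mem_neighborFinset] at this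
        exact this
      refine ⟨?_, by simp, by simp⟩
      intro a ha b hb hab
      simp only [Finset.coe_insert, Set.mem_insert_iff, Finset.mem_coe] at ha hb
      rcases ha with rfl | rfl | ha <;> rcases hb with rfl | rfl | hb
      · exact absurd rfl hab
      · exact huv
      · exact (hWmem _ hb).1
      · exact huv.symm
      · exact absurd rfl hab
      · exact (hWmem _ hb).2
      · exact (hWmem _ ha).1.symm
      · exact (hWmem _ ha).2.symm
      · exact hK' ha hb hab
    · rintro K hK
      simp only [Finset.mem_filter, Finset.mem_univ, true_and] at hK
      obtain ⟨-, hu, hv⟩ := hK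
      ext a
      simp only [Finset.mem_insert, Finset.mem_sdiff, Finset.mem_singleton, not_or]
      constructor
      · rintro (rfl | rfl | ⟨ha, -, -⟩) <;> assumption
      · intro ha
        by_cases hau : a = u
        · exact Or.inl hau
        by_cases hav : a = v
        · exact Or.inr (Or.inl hav)
        · exact Or.inr (Or.inr ⟨ha, hau, hav⟩)
    · rintro K' hK'
      simp only [Finset.mem_filter, Finset.mem_univ, true_and] at hK'
      obtain ⟨-, hsub⟩ := hK'
      have huK' : u ∉ K' := by
        intro h
        have := hsub h
        simp only [hW, Finset.mem_inter, SimpleGraph.mem_neighborFinset] at this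
        exact G.irrefl this.1
      have hvK' : v ∉ K' := by
        intro h
        have := hsub h
        simp only [hW, Finset.mem_inter, SimpleGraph.mem_neighborFinset] at this
        exact G.irrefl this.2
      ext a
      simp only [Finset.mem_sdiff, Finset.mem_insert, Finset.mem_singleton, not_or]
      constructor
      · rintro ⟨rfl | rfl | ha, hau, hav⟩
        · exact absurd rfl hau
        · exact absurd rfl hav
        · exact ha
      · intro ha
        exact ⟨Or.inr (Or.inr ha), fun h => huK' (h ▸ ha), fun h => hvK' (h ▸ ha)⟩
    · rintro K hK
      simp only [Finset.mem_filter, Finset.mem_univ, true_and] at hK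
      obtain ⟨hKcl, hu, hv⟩ := hK
      have hWsub : K \ {u, v} ⊆ W := by
        intro a ha
        simp only [Finset.mem_sdiff, Finset.mem_insert, Finset.mem_singleton,
          not_or] at ha
        obtain ⟨haK, hau, hav⟩ := ha
        simp only [hW, Finset.mem_inter, SimpleGraph.mem_neighborFinset]
        exact ⟨hKcl hu haK (Ne.symm hau), hKcl hv haK (Ne.symm hav)⟩
      have hcard : K.card = (K \ {u, v}).card + 2 := by
        have h1 : ({u, v} : Finset V) ⊆ K := by
          intro a ha; simp only [Finset.mem_insert, Finset.mem_singleton] at ha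
          rcases ha with rfl | rfl <;> assumption
        have h2 : ({u, v} : Finset V).card = 2 := Finset.card_pair hne
        have h3 := Finset.card_sdiff_of_subset h1
        have h4 : ({u, v} : Finset V).card ≤ K.card := Finset.card_le_card h1
        omega
      have hinterW : (K \ {u, v}) ∩ (B ∩ W) = (K \ {u, v}) ∩ B := by
        rw [Finset.inter_comm B W, ← Finset.inter_assoc,
          Finset.inter_eq_left.2 hWsub]
      have hdecomp : K ∩ B = ((K \ {u, v}) ∩ B) ∪ (({u, v} : Finset V) ∩ B) := by
        ext a
        simp only [Finset.mem_inter, Finset.mem_union, Finset.mem_sdiff,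
          Finset.mem_insert, Finset.mem_singleton, not_or]
        constructor
        · rintro ⟨haK, haB⟩
          by_cases hau : a = u
          · exact Or.inr ⟨Or.inl hau, haB⟩
          by_cases hav : a = v
          · exact Or.inr ⟨Or.inr hav, haB⟩
          · exact Or.inl ⟨⟨haK, hau, hav⟩, haB⟩
        · rintro (⟨⟨haK, -, -⟩, haB⟩ | ⟨(rfl | rfl), haB⟩)
          · exact ⟨haK, haB⟩
          · exact ⟨hu, haB⟩
          · exact ⟨hv, haB⟩
      have hdisj : Disjoint ((K \ {u, v}) ∩ B) (({u, v} : Finset V) ∩ B) := by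
        refine Finset.disjoint_left.2 ?_
        intro a ha hb
        simp only [Finset.mem_inter, Finset.mem_sdiff] at ha hb
        exact ha.1.2 hb.1
      have hpairB : (({u, v} : Finset V) ∩ B).card
          = (if u ∈ B then 1 else 0) + (if v ∈ B then 1 else 0) := by
        by_cases hu' : u ∈ B <;> by_cases hv' : v ∈ B <;>
          simp [Finset.insert_inter_of_mem, Finset.insert_inter_of_notMem,
            Finset.singleton_inter_of_mem, Finset.singleton_inter_of_notMem,
            hu', hv', Finset.card_pair hne, hne]
      have hBcard : (K ∩ B).card
          = ((K \ {u, v}) ∩ (B ∩ W)).card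
            + ((if u ∈ B then 1 else 0) + (if v ∈ B then 1 else 0)) := by
        rw [hinterW, hdecomp, Finset.card_union_of_disjoint hdisj, hpairB]
      have key : x ^ K.card * y ^ (K ∩ B).card
          = x ^ 2 * y ^ ((if u ∈ B then 1 else 0) + (if v ∈ B then 1 else 0))
            * (x ^ (K \ {u, v}).card * y ^ ((K \ {u, v}) ∩ (B ∩ W)).card) := by
        rw [hcard, hBcard, pow_add, pow_add]; ring
      convert key using 4
      all_goals first
        | (ext a; simp)
        | (congr 1; ext a; simp)
end

section
/- Perfect elimination ordering recurrence: let G be a finite simple graph, v a simplicial vertex extension, i.e., G is obtained from G' by adding a vertex v whose neighborhood N(v) in G is a clique of G'. Then for any B ⊆ V(G), C_B(G; x, y) = C_B(G'; x, y) + x·y^{[v ∈ B]} · Π_{u ∈ N(v)} (1 + x·y^{[u ∈ B]}). -/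
open scoped Classical

/-!
Split the cliques of `G[insert v W]` according to whether they contain `v`. Those that do are
exactly `insert v t` for cliques `t` of `G[N(v) ∩ W]`, each contributing the extra factor
`x·y^{[v∈B]}`. When `N(v) ⊆ W` is a clique, every subset of it is a clique, so its clique
polynomial is the full subset expansion `∏_{u ∈ N(v)} (1 + x·y^{[u∈B]})`.
-/

open Finset

section Weights

variable {V : Type*} [DecidableEq V] (B : Finset V) (x y : ℝ)

lemma prod_mul_pow_ite_mem (t : Finset V) :
    ∏ u ∈ t, x * y ^ (if u ∈ B then 1 else 0) = x ^ t.card * y ^ (t ∩ B).card := by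
  rw [prod_mul_distrib, prod_const, prod_pow_eq_pow_sum, ← card_filter, filter_mem_eq_inter]

lemma pow_card_insert_mul_pow_card_insert_inter {v : V} {t : Finset V} (hv : v ∉ t) :
    x ^ (insert v t).card * y ^ (insert v t ∩ B).card
      = x * y ^ (if v ∈ B then 1 else 0) * (x ^ t.card * y ^ (t ∩ B).card) := by
  by_cases hvB : v ∈ B
  · rw [insert_inter_of_mem hvB, card_insert_of_notMem hv,
      card_insert_of_notMem fun h => hv (mem_of_mem_inter_left h), if_pos hvB]
    ring
  · rw [insert_inter_of_notMem hvB, card_insert_of_notMem hv, if_neg hvB]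
    ring

end Weights

section CliquePoly

variable {V : Type*} [Fintype V] [DecidableEq V] (G : SimpleGraph V) (B : Finset V) (x y : ℝ)

/-- The definition elaborates `∩` and the filter with classical decidability instances. -/
lemma biCliquePolyOn_eq_sum (W : Finset V) :
    biCliquePolyOn G W B x y
      = ∑ K ∈ univ.filter (fun K : Finset V => G.IsClique (K : Set V) ∧ K ⊆ W),
          x ^ K.card * y ^ (K ∩ B).card := by
  unfold biCliquePolyOn
  congr!

lemma biCliquePolyOn_of_isClique {S : Finset V} (hS : G.IsClique (S : Set V)) :
    biCliquePolyOn G S B x y = ∏ u ∈ S, (1 + x * y ^ (if u ∈ B then 1 else 0)) := by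
  have hcliques : univ.filter (fun K : Finset V => G.IsClique (K : Set V) ∧ K ⊆ S)
      = S.powerset := by
    ext K
    simpa using fun hK : K ⊆ S => hS.subset (coe_subset.mpr hK)
  simp only [biCliquePolyOn_eq_sum, hcliques, prod_one_add, prod_mul_pow_ite_mem]

lemma isClique_insert_and_subset_insert_iff [DecidableRel G.Adj] {t W : Finset V} {v : V}
    (hvt : v ∉ t) :
    G.IsClique (↑(insert v t) : Set V) ∧ insert v t ⊆ insert v W
      ↔ G.IsClique (t : Set V) ∧ t ⊆ G.neighborFinset v ∩ W := by
  have hadj : (∀ u ∈ (t : Set V), v ≠ u → G.Adj v u) ↔ t ⊆ G.neighborFinset v :=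
    ⟨fun h u hu => (G.mem_neighborFinset v u).mpr (h u hu (ne_of_mem_of_not_mem hu hvt).symm),
      fun h u hu _ => (G.mem_neighborFinset v u).mp (h hu)⟩
  rw [coe_insert, SimpleGraph.isClique_insert, insert_subset_insert_iff hvt, subset_inter_iff,
    hadj, and_assoc]

lemma biCliquePolyOn_insert [DecidableRel G.Adj] {W : Finset V} {v : V} (hv : v ∉ W) :
    biCliquePolyOn G (insert v W) B x y
      = biCliquePolyOn G W B x y
        + x * y ^ (if v ∈ B then 1 else 0) * biCliquePolyOn G (G.neighborFinset v ∩ W) B x y := by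
  simp only [biCliquePolyOn_eq_sum]
  rw [← sum_filter_add_sum_filter_not _ (fun K => v ∉ K), mul_sum]
  congr 1
  · refine sum_congr ?_ fun _ _ => rfl
    ext K
    simp only [filter_filter, mem_filter, mem_univ, true_and]
    constructor
    · rintro ⟨⟨hK, hKW⟩, hvK⟩
      exact ⟨hK, (subset_insert_iff_of_notMem hvK).mp hKW⟩
    · rintro ⟨hK, hKW⟩
      exact ⟨⟨hK, hKW.trans (subset_insert v W)⟩, fun hvK => hv (hKW hvK)⟩
  · refine sum_nbij' (fun K => K.erase v) (insert v) ?_ ?_ ?_ ?_ ?_ <;>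
      simp only [mem_filter, mem_univ, true_and, not_not]
    · rintro K ⟨hK, hvK⟩
      rw [← insert_erase hvK] at hK
      exact (isClique_insert_and_subset_insert_iff G (notMem_erase v K)).mp hK
    · rintro t ⟨ht, htN⟩
      have hvt : v ∉ t := fun hvt => hv (mem_inter.mp (htN hvt)).2
      exact ⟨(isClique_insert_and_subset_insert_iff G hvt).mpr ⟨ht, htN⟩, mem_insert_self v t⟩
    · rintro K ⟨-, hvK⟩
      exact insert_erase hvK
    · rintro t ⟨-, htN⟩
      exact erase_insert fun hvt => hv (mem_inter.mp (htN hvt)).2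
    · rintro K ⟨-, hvK⟩
      rw [← pow_card_insert_mul_pow_card_insert_inter B x y (notMem_erase v K),
        insert_erase hvK]

end CliquePoly

/-- Perfect elimination ordering recurrence: if `G` (viewed on the window
`insert v W`) is obtained from `G' = G[W]` by adding a simplicial vertex `v ∉ W`
whose neighborhood inside `W` is a clique, then
`C_B(G;x,y) = C_B(G';x,y) + x·y^{[v∈B]} · Π_{u ∈ N(v)} (1 + x·y^{[u∈B]})`. -/
theorem biCliquePoly_simplicial_extension {V : Type*} [Fintype V] [DecidableEq V]
    (G : SimpleGraph V) [DecidableRel G.Adj] (W B : Finset V) (v : V)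
    (hv : v ∉ W)
    (hclique : G.IsClique ((G.neighborFinset v ∩ W : Finset V) : Set V))
    (hnbr : G.neighborFinset v ⊆ W) (x y : ℝ) :
    biCliquePolyOn G (insert v W) B x y
      = biCliquePolyOn G W B x y
        + x * y ^ (if v ∈ B then 1 else 0)
          * ∏ u ∈ G.neighborFinset v, (1 + x * y ^ (if u ∈ B then 1 else 0)) := by
  have hN : G.neighborFinset v ∩ W = G.neighborFinset v := inter_eq_left.mpr hnbr
  have hNclique : G.IsClique (G.neighborFinset v : Set V) := hN ▸ hclique
  rw [biCliquePolyOn_insert G B x y hv, hN, biCliquePolyOn_of_isClique G B x y hNclique]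
end
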